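/- arXiv:2603.22020 — 7 statements merged into one kernel-verified Lean document; each statement's English description precedes it below -/
import Mathlib

section
/- Let (Ω, μ) be a probability space, let c be a measurable event with μ(c) > 0, and let z, ξ_a, ξ_b be square-integrable real random variables such that ∫_c ξ_a dμ = ∫_c ξ_b dμ = 0, ∫_c z·ξ_a dμ = ∫_c z·ξ_b dμ = 0, and ∫_c ξ_a·ξ_b dμ = 0. Set a = z + ξ_a and b = z + ξ_b. Then (∫_c (a + b) dμ)² ≤ 4 · μ(c) · ∫_c (a·b) dμ. (This is the classical objective-realism inequality ⟨a+b|c⟩² ≤ 4⟨ab|c⟩ for two identical independent noisy readouts of an objectively real value z, conditioned on c.) -/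
/-!
Both noise terms drop out of the conditional moments: `∫_c (a + b) = 2 ∫_c z` and
`∫_c a b = ∫_c z²`. The inequality is then Cauchy–Schwarz `(∫_c z)² ≤ μ(c) ∫_c z²`.
-/

open MeasureTheory

section
variable {Ω : Type*} [MeasurableSpace Ω] {ν : Measure Ω}

lemma sq_integral_le_measureReal_univ_mul_integral_sq [IsFiniteMeasure ν] {f : Ω → ℝ}
    (hf : MemLp f 2 ν) :
    (∫ x, f x ∂ν) ^ 2 ≤ ν.real Set.univ * ∫ x, f x ^ 2 ∂ν := by
  have hf1 : Integrable f ν := hf.integrable one_le_two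
  have hf2 : Integrable (fun x => f x ^ 2) ν := hf.integrable_sq
  -- the quadratic `t ↦ ∫ (t + f)²` is nonnegative, so its discriminant is nonpositive
  have hquad : ∀ t : ℝ,
      0 ≤ ν.real Set.univ * (t * t) + (2 * ∫ x, f x ∂ν) * t + ∫ x, f x ^ 2 ∂ν := by
    intro t
    have hexpand : ∫ x, (t + f x) ^ 2 ∂ν
        = ν.real Set.univ * (t * t) + (2 * ∫ x, f x ∂ν) * t + ∫ x, f x ^ 2 ∂ν := by
      have hlin : Integrable (fun x => t ^ 2 + 2 * t * f x) ν :=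
        (integrable_const _).add (hf1.const_mul _)
      simp only [add_sq]
      rw [integral_add hlin hf2, integral_add (integrable_const _) (hf1.const_mul _),
        integral_const, integral_const_mul]
      simp only [smul_eq_mul]
      ring
    exact hexpand ▸ integral_nonneg fun x => sq_nonneg _
  have := discrim_le_zero hquad
  rw [discrim] at this
  nlinarith

variable {z ξa ξb : Ω → ℝ}

lemma integral_add_noisy_readouts (hz : Integrable z ν) (hξa : Integrable ξa ν)
    (hξb : Integrable ξb ν) (ha : ∫ x, ξa x ∂ν = 0) (hb : ∫ x, ξb x ∂ν = 0) :
    ∫ x, (z x + ξa x) + (z x + ξb x) ∂ν = 2 * ∫ x, z x ∂ν := by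
  have hsa : Integrable (fun x => z x + ξa x) ν := hz.add hξa
  have hsb : Integrable (fun x => z x + ξb x) ν := hz.add hξb
  rw [integral_add hsa hsb, integral_add hz hξa, integral_add hz hξb, ha, hb]
  ring

lemma integral_mul_noisy_readouts (hz : MemLp z 2 ν) (hξa : MemLp ξa 2 ν)
    (hξb : MemLp ξb 2 ν) (hza : ∫ x, z x * ξa x ∂ν = 0) (hzb : ∫ x, z x * ξb x ∂ν = 0)
    (hab : ∫ x, ξa x * ξb x ∂ν = 0) :
    ∫ x, (z x + ξa x) * (z x + ξb x) ∂ν = ∫ x, z x ^ 2 ∂ν := by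
  have hzz : Integrable (fun x => z x * z x) ν := hz.integrable_mul hz
  have hzξb : Integrable (fun x => z x * ξb x) ν := hz.integrable_mul hξb
  have hξaz : Integrable (fun x => ξa x * z x) ν := hξa.integrable_mul hz
  have hξab : Integrable (fun x => ξa x * ξb x) ν := hξa.integrable_mul hξb
  have hleft : Integrable (fun x => z x * z x + ξa x * z x) ν := hzz.add hξaz
  have hright : Integrable (fun x => z x * ξb x + ξa x * ξb x) ν := hzξb.add hξab
  simp only [add_mul, mul_add]
  rw [integral_add hleft hright, integral_add hzz hξaz, integral_add hzξb hξab, hzb, hab]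
  simp only [mul_comm (ξa _) (z _), hza, sq]
  ring
end

theorem stmt_0_general {Ω : Type*} [MeasurableSpace Ω] (μ : Measure Ω) [IsProbabilityMeasure μ]
    (c : Set Ω)
    (z ξa ξb : Ω → ℝ)
    (hz : MemLp z 2 μ) (hξa : MemLp ξa 2 μ) (hξb : MemLp ξb 2 μ)
    (ha0 : ∫ x in c, ξa x ∂μ = 0) (hb0 : ∫ x in c, ξb x ∂μ = 0)
    (hza : ∫ x in c, z x * ξa x ∂μ = 0) (hzb : ∫ x in c, z x * ξb x ∂μ = 0)
    (hab : ∫ x in c, ξa x * ξb x ∂μ = 0) :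
    (∫ x in c, ((z x + ξa x) + (z x + ξb x)) ∂μ) ^ 2 ≤
      4 * (μ c).toReal * ∫ x in c, (z x + ξa x) * (z x + ξb x) ∂μ := by
  have hzc := hz.restrict c
  have hac := hξa.restrict c
  have hbc := hξb.restrict c
  rw [integral_add_noisy_readouts (hzc.integrable one_le_two) (hac.integrable one_le_two)
      (hbc.integrable one_le_two) ha0 hb0,
    integral_mul_noisy_readouts hzc hac hbc hza hzb hab]
  have hcs := sq_integral_le_measureReal_univ_mul_integral_sq hzc
  rw [measureReal_restrict_apply_univ] at hcs
  calc (2 * ∫ x in c, z x ∂μ) ^ 2 = 4 * (∫ x in c, z x ∂μ) ^ 2 := by ring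
    _ ≤ 4 * (μ.real c * ∫ x in c, z x ^ 2 ∂μ) := by gcongr
    _ = 4 * (μ c).toReal * ∫ x in c, z x ^ 2 ∂μ := by rw [mul_assoc, measureReal_def]

/-- The classical objective-realism inequality `⟨a+b|c⟩² ≤ 4⟨ab|c⟩` for two identical
independent noisy readouts `a = z + ξa`, `b = z + ξb` of an objectively real value `z`,
conditioned on an event `c` of positive probability. -/
theorem stmt_0 {Ω : Type*} [MeasurableSpace Ω] (μ : Measure Ω) [IsProbabilityMeasure μ]
    (c : Set Ω) (hc : MeasurableSet c) (hcpos : 0 < μ c)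
    (z ξa ξb : Ω → ℝ)
    (hz : MemLp z 2 μ) (hξa : MemLp ξa 2 μ) (hξb : MemLp ξb 2 μ)
    (ha0 : ∫ x in c, ξa x ∂μ = 0) (hb0 : ∫ x in c, ξb x ∂μ = 0)
    (hza : ∫ x in c, z x * ξa x ∂μ = 0) (hzb : ∫ x in c, z x * ξb x ∂μ = 0)
    (hab : ∫ x in c, ξa x * ξb x ∂μ = 0) :
    (∫ x in c, ((z x + ξa x) + (z x + ξb x)) ∂μ) ^ 2 ≤
      4 * (μ c).toReal * ∫ x in c, (z x + ξa x) * (z x + ξb x) ∂μ :=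
  stmt_0_general μ c z ξa ξb hz hξa hξb ha0 hb0 hza hzb hab
end

section
/- For ψ ∈ ℝ with 0 < ψ < π/2, with v₊ = (sin(ψ/2), cos(ψ/2)), v₋ = (−sin(ψ/2), cos(ψ/2)) in ℂ², ρ = v₊v₊ᴴ, C = v₋v₋ᴴ, and Z = diag(1, −1), the quantum weak-measurement statistics violate the objective-realism inequality: (trace(C·(Z·ρ + ρ·Z)))² > 2 · trace(C·(ρ + Z·ρ·Z)) · trace(C·ρ). Equivalently, the ratio ⟨a+b|c⟩²/(4⟨ab|c⟩) equals 2/(1 + cos²ψ) > 1. -/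
open Matrix

/-- The state `|ψ₊⟩ = cos(ψ/2)|1⟩ + sin(ψ/2)|0⟩` as a coordinate vector. -/
noncomputable def vPlus (ψ : ℝ) : Fin 2 → ℂ := ![(Real.sin (ψ / 2) : ℂ), (Real.cos (ψ / 2) : ℂ)]

/-- The state `|ψ₋⟩ = cos(ψ/2)|1⟩ − sin(ψ/2)|0⟩` as a coordinate vector. -/
noncomputable def vMinus (ψ : ℝ) : Fin 2 → ℂ := ![(-Real.sin (ψ / 2) : ℂ), (Real.cos (ψ / 2) : ℂ)]

/-- The initial state `ρ = |ψ₊⟩⟨ψ₊|`. -/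
noncomputable def ρMat (ψ : ℝ) : Matrix (Fin 2) (Fin 2) ℂ := vecMulVec (vPlus ψ) (star (vPlus ψ))

/-- The final projection `C = |ψ₋⟩⟨ψ₋|`. -/
noncomputable def CMat (ψ : ℝ) : Matrix (Fin 2) (Fin 2) ℂ := vecMulVec (vMinus ψ) (star (vMinus ψ))

/-- The Pauli `Z` matrix `diag(1, −1)`. -/
def ZMat : Matrix (Fin 2) (Fin 2) ℂ := !![1, 0; 0, -1]

lemma hcosC (ψ : ℝ) : (Real.cos ψ : ℂ) = (Real.cos (ψ/2) : ℂ)^2 - (Real.sin (ψ/2) : ℂ)^2 := by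
  have h2 : Real.cos ψ = 2 * Real.cos (ψ/2)^2 - 1 := by
    have := Real.cos_two_mul (ψ/2); rw [show 2*(ψ/2) = ψ by ring] at this; linarith
  have hp := Real.sin_sq_add_cos_sq (ψ/2)
  have : Real.cos ψ = Real.cos (ψ/2)^2 - Real.sin (ψ/2)^2 := by linarith
  exact_mod_cast this

lemma hpyC (ψ : ℝ) : (Real.sin (ψ/2) : ℂ)^2 + (Real.cos (ψ/2) : ℂ)^2 = 1 := by
  exact_mod_cast Real.sin_sq_add_cos_sq (ψ/2)

lemma l1 (ψ : ℝ) :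
    trace (CMat ψ * (ZMat * ρMat ψ + ρMat ψ * ZMat)) = ((-(2 * Real.cos ψ) : ℝ) : ℂ) := by
  simp only [CMat, ρMat, ZMat, vPlus, vMinus, Matrix.trace, Matrix.diag, Matrix.mul_apply,
    Matrix.add_apply, Fin.sum_univ_two, vecMulVec_apply, Pi.star_apply, Matrix.cons_val_zero,
    Matrix.cons_val_one, Matrix.head_cons, Matrix.cons_val', Matrix.cons_val_fin_one,
    Matrix.empty_val', Matrix.head_fin_const, Matrix.of_apply, RCLike.star_def, map_neg,
    Complex.conj_ofReal, Complex.ofReal_add, Complex.ofReal_pow, Complex.ofReal_one,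
    Complex.ofReal_neg, Complex.ofReal_mul, Complex.ofReal_ofNat]
  rw [hcosC ψ]
  linear_combination (2 * (Real.sin (ψ/2):ℂ)^2 - 2 * (Real.cos (ψ/2):ℂ)^2) * hpyC ψ

lemma l2 (ψ : ℝ) :
    trace (CMat ψ * (ρMat ψ + ZMat * ρMat ψ * ZMat)) = ((Real.cos ψ ^ 2 + 1 : ℝ) : ℂ) := by
  simp only [CMat, ρMat, ZMat, vPlus, vMinus, Matrix.trace, Matrix.diag, Matrix.mul_apply,
    Matrix.add_apply, Fin.sum_univ_two, vecMulVec_apply, Pi.star_apply, Matrix.cons_val_zero,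
    Matrix.cons_val_one, Matrix.head_cons, Matrix.cons_val', Matrix.cons_val_fin_one,
    Matrix.empty_val', Matrix.head_fin_const, Matrix.of_apply, RCLike.star_def, map_neg,
    Complex.conj_ofReal, Complex.ofReal_add, Complex.ofReal_pow, Complex.ofReal_one,
    Complex.ofReal_neg, Complex.ofReal_mul, Complex.ofReal_ofNat]
  rw [hcosC ψ]
  linear_combination (1 + ((Real.sin (ψ/2):ℂ)^2 + (Real.cos (ψ/2):ℂ)^2)) * hpyC ψ

lemma l3 (ψ : ℝ) :
    trace (CMat ψ * ρMat ψ) = ((Real.cos ψ ^ 2 : ℝ) : ℂ) := by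
  simp only [CMat, ρMat, ZMat, vPlus, vMinus, Matrix.trace, Matrix.diag, Matrix.mul_apply,
    Matrix.add_apply, Fin.sum_univ_two, vecMulVec_apply, Pi.star_apply, Matrix.cons_val_zero,
    Matrix.cons_val_one, Matrix.head_cons, Matrix.cons_val', Matrix.cons_val_fin_one,
    Matrix.empty_val', Matrix.head_fin_const, Matrix.of_apply, RCLike.star_def, map_neg,
    Complex.conj_ofReal, Complex.ofReal_add, Complex.ofReal_pow, Complex.ofReal_one,
    Complex.ofReal_neg, Complex.ofReal_mul, Complex.ofReal_ofNat]
  rw [hcosC ψ]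
  ring

/-- Quantum weak-measurement statistics violate the objective-realism inequality:
`(trace(C(Zρ+ρZ)))² > 2·trace(C(ρ+ZρZ))·trace(Cρ)`, and the objective-realism ratio
equals `2/(1+cos²ψ) > 1`. -/
theorem stmt_2 (ψ : ℝ) (h0 : 0 < ψ) (h1 : ψ < Real.pi / 2) :
    (trace (CMat ψ * (ZMat * ρMat ψ + ρMat ψ * ZMat))).re ^ 2 >
      2 * (trace (CMat ψ * (ρMat ψ + ZMat * ρMat ψ * ZMat))).re * (trace (CMat ψ * ρMat ψ)).re ∧
    2 / (1 + Real.cos ψ ^ 2) > 1 := by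
  have hs0 : 0 < Real.sin ψ := Real.sin_pos_of_pos_of_lt_pi h0 (by linarith [Real.pi_pos])
  have hcc : Real.cos ψ ^ 2 < 1 := by nlinarith [Real.sin_sq_add_cos_sq ψ]
  have hc0 : 0 < Real.cos ψ := Real.cos_pos_of_mem_Ioo ⟨by linarith [Real.pi_pos], h1⟩
  constructor
  · rw [l1, l2, l3, Complex.ofReal_re, Complex.ofReal_re, Complex.ofReal_re]
    nlinarith [mul_pos (mul_pos hc0 hc0) (by linarith : (0:ℝ) < 1 - Real.cos ψ ^ 2)]
  · rw [gt_iff_lt, lt_div_iff₀ (by nlinarith)]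
    nlinarith
end

section
/- For ψ ∈ ℝ and 0 ≤ λ ≤ 1, let s = √(1 − λ²) and define the quantum channel 𝒦(ρ) = ((1+s)·ρ + (1−s)·Z·ρ·Z)/2 on 2×2 complex matrices, where Z = diag(1,−1). With v₊ = (sin(ψ/2), cos(ψ/2)), v₋ = (−sin(ψ/2), cos(ψ/2)), ρ = v₊v₊ᴴ and C = v₋v₋ᴴ, the conditioning probability after two weak measurements of strength λ is trace(C·𝒦(𝒦(ρ))) = cos²ψ + λ²·sin²ψ/2. -/
open Matrix

/-- The disturbance channel `𝒦(ρ) = ((1+s)ρ + (1−s)ZρZ)/2` with `s = √(1−λ²)` of one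
dichotomic weak measurement of `Z` of strength `λ`. -/
noncomputable def Kchan (lam : ℝ) (ρ : Matrix (Fin 2) (Fin 2) ℂ) : Matrix (Fin 2) (Fin 2) ℂ :=
  (((1 + Real.sqrt (1 - lam ^ 2)) / 2 : ℝ) : ℂ) • ρ +
    (((1 - Real.sqrt (1 - lam ^ 2)) / 2 : ℝ) : ℂ) • (ZMat * ρ * ZMat)

lemma Kchan_explicit (lam : ℝ) (a b c d : ℂ) :
    Kchan lam !![a, b; c, d] =
      !![a, (Real.sqrt (1 - lam ^ 2) : ℂ) * b; (Real.sqrt (1 - lam ^ 2) : ℂ) * c, d] := by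
  ext i j
  fin_cases i <;> fin_cases j <;>
    simp [Kchan, ZMat, Matrix.mul_apply, Fin.sum_univ_two] <;> ring

lemma vecMulVec_explicit (x y : ℝ) :
    vecMulVec ![(x:ℂ), (y:ℂ)] (star ![(x:ℂ), (y:ℂ)]) =
      !![(x:ℂ)*x, (x:ℂ)*y; (y:ℂ)*x, (y:ℂ)*y] := by
  ext i j
  fin_cases i <;> fin_cases j <;>
    simp [Matrix.vecMulVec_apply, Complex.star_def, Complex.conj_ofReal]

/-- The conditioning probability after two weak measurements of strength `λ` is
`trace(C·𝒦(𝒦(ρ))) = cos²ψ + λ²·sin²ψ/2`. -/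
theorem stmt_3 (ψ lam : ℝ) (h0 : 0 ≤ lam) (h1 : lam ≤ 1) :
    trace (CMat ψ * Kchan lam (Kchan lam (ρMat ψ))) =
      ((Real.cos ψ ^ 2 + lam ^ 2 * Real.sin ψ ^ 2 / 2 : ℝ) : ℂ) := by
  have hsq : Real.sqrt (1 - lam ^ 2) ^ 2 = 1 - lam ^ 2 :=
    Real.sq_sqrt (by nlinarith)
  have hc : Real.cos ψ = Real.cos (ψ/2) ^ 2 - Real.sin (ψ/2) ^ 2 := by
    have := Real.cos_two_mul' (ψ/2)
    rw [show 2*(ψ/2) = ψ by ring] at this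
    linarith
  have hs : Real.sin ψ = 2 * Real.sin (ψ/2) * Real.cos (ψ/2) := by
    have := Real.sin_two_mul (ψ/2)
    rw [show 2*(ψ/2) = ψ by ring] at this
    linarith
  have hρ : ρMat ψ = !![((Real.sin (ψ/2):ℂ)) * Real.sin (ψ/2), (Real.sin (ψ/2):ℂ) * Real.cos (ψ/2);
      (Real.cos (ψ/2):ℂ) * Real.sin (ψ/2), (Real.cos (ψ/2):ℂ) * Real.cos (ψ/2)] := by
    rw [ρMat, vPlus, vecMulVec_explicit]
  have hC : CMat ψ = vecMulVec ![(-Real.sin (ψ/2) : ℂ), (Real.cos (ψ/2) : ℂ)]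
      (star ![(-Real.sin (ψ/2) : ℂ), (Real.cos (ψ/2) : ℂ)]) := rfl
  rw [hρ, Kchan_explicit, Kchan_explicit, Matrix.trace_fin_two]
  set q := Real.sqrt (1 - lam ^ 2) with hq
  simp only [CMat, vMinus, Matrix.mul_apply, Fin.sum_univ_two, Matrix.vecMulVec_apply,
    Matrix.cons_val_zero, Matrix.cons_val_one, Matrix.head_cons, Pi.star_apply,
    Matrix.of_apply, Matrix.cons_val', Matrix.empty_val', Matrix.cons_val_fin_one,
    Matrix.head_fin_const, star_neg, Complex.star_def, Complex.conj_ofReal, hc, hs]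
  have hq2 : ((q:ℂ))^2 = 1 - (lam:ℂ)^2 := by exact_mod_cast congrArg (Complex.ofReal) hsq
  simp only [map_neg, Complex.conj_ofReal]
  push_cast
  linear_combination (-Complex.sin ((ψ:ℂ)/2)^2 * Complex.cos ((ψ:ℂ)/2)^2 * 2) * hq2
end

section
/- Let c, λ ∈ ℝ with 0 < c < 1 and 0 < λ ≤ 1. Then the objective-realism ratio at finite measurement strength, R = 2c² / ((c² + λ²(1−c²)/2)(1 + c²)), satisfies R > 1 if and only if λ² < 2c²/(1 + c²). In particular, for λ = 1 (projective measurements) R ≤ 1 for every c ∈ (0,1), so the violation disappears for projective measurements. -/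
/-- The objective-realism ratio at finite measurement strength
`R = 2c²/((c² + λ²(1−c²)/2)(1+c²))` exceeds `1` iff `λ² < 2c²/(1+c²)`; in particular for
projective measurements (`λ = 1`) the violation disappears: `R ≤ 1`. -/
theorem stmt_4 (c lam : ℝ) (hc0 : 0 < c) (hc1 : c < 1) (hl0 : 0 < lam) (hl1 : lam ≤ 1) :
    (2 * c ^ 2 / ((c ^ 2 + lam ^ 2 * (1 - c ^ 2) / 2) * (1 + c ^ 2)) > 1 ↔
      lam ^ 2 < 2 * c ^ 2 / (1 + c ^ 2)) ∧
    (lam = 1 → 2 * c ^ 2 / ((c ^ 2 + lam ^ 2 * (1 - c ^ 2) / 2) * (1 + c ^ 2)) ≤ 1) := by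
  have hc2 : (0:ℝ) < c ^ 2 := by positivity
  have h1c : (0:ℝ) < 1 - c ^ 2 := by nlinarith
  have hden : (0:ℝ) < (c ^ 2 + lam ^ 2 * (1 - c ^ 2) / 2) * (1 + c ^ 2) := by positivity
  have hP : (0:ℝ) < 1 + c ^ 2 := by positivity
  constructor
  · rw [gt_iff_lt, lt_div_iff₀ hden, lt_div_iff₀ hP]
    constructor <;> intro h <;> nlinarith
  · intro h; subst h
    rw [div_le_one hden]; nlinarith
end

section
/- (Theorem 1, informative part.) Let M_A, P_A be Hermitian m×m complex matrices and M_B, P_B Hermitian n×n complex matrices with M_B·P_B ≠ P_B·M_B. If for every Hermitian mn×mn complex matrix H one has trace((M_A ⊗ M_B) · ((P_A ⊗ P_B)·H − H·(P_A ⊗ P_B))) = 0, then M_A and P_A anticommute: M_A·P_A + P_A·M_A = 0. -/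
open Matrix Kronecker

/-- Trace positivity: `trace (Aᴴ * A) = 0` implies `A = 0` over `ℂ`. -/
lemma aux_trace_conjTranspose_mul_self_eq_zero {k l : Type*} [Fintype k] [Fintype l]
    (A : Matrix k l ℂ) (h : Matrix.trace (Aᴴ * A) = 0) : A = 0 := by
  have hre : ∑ j, ∑ i, Complex.normSq (A i j) = 0 := by
    have h' := congrArg Complex.re h
    simp only [Matrix.trace, Matrix.diag, Matrix.mul_apply, Matrix.conjTranspose_apply] at h'
    simp only [Complex.star_def, ← Complex.normSq_eq_conj_mul_self] at h'
    simpa using h'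
  have hnn : ∀ j ∈ Finset.univ, (0:ℝ) ≤ ∑ i, Complex.normSq (A i j) :=
    fun j _ => Finset.sum_nonneg fun i _ => Complex.normSq_nonneg _
  ext i j
  have hj := (Finset.sum_eq_zero_iff_of_nonneg hnn).mp hre j (Finset.mem_univ j)
  have hij := (Finset.sum_eq_zero_iff_of_nonneg
    (fun i _ => Complex.normSq_nonneg (A i j))).mp hj i (Finset.mem_univ i)
  simpa using Complex.normSq_eq_zero.mp hij

/-- Conjugate transpose of a Kronecker product. -/
lemma aux_kron_conjTranspose {m n p q : Type*} (A : Matrix m p ℂ) (B : Matrix n q ℂ) :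
    (A ⊗ₖ B)ᴴ = Aᴴ ⊗ₖ Bᴴ := by
  ext ⟨i, j⟩ ⟨k, l⟩
  simp [Matrix.conjTranspose_apply, Matrix.kroneckerMap_apply]

/-- Cyclic rotation of a trace of a product of four matrices. -/
lemma aux_rot {k : Type*} [Fintype k] (A B C D : Matrix k k ℂ) :
    Matrix.trace (A * (B * (C * D))) = Matrix.trace (B * (C * (D * A))) := by
  rw [Matrix.trace_mul_comm]
  congr 1
  noncomm_ring

/-- Theorem 1, informative part: if the leading-order cross-correlation
`trace((M_A ⊗ M_B)[P_A ⊗ P_B, H])` vanishes for every Hermitian coupling Hamiltonian `H`,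
where all four matrices are Hermitian and `M_B`, `P_B` do not commute, then `M_A` and `P_A`
anticommute. -/
theorem stmt_11 {m n : Type*} [Fintype m] [Fintype n] [DecidableEq m] [DecidableEq n]
    (MA PA : Matrix m m ℂ) (MB PB : Matrix n n ℂ)
    (hMA : MA.IsHermitian) (hPA : PA.IsHermitian)
    (hMB : MB.IsHermitian) (hPB : PB.IsHermitian)
    (hBq : MB * PB ≠ PB * MB)
    (h : ∀ H : Matrix (m × n) (m × n) ℂ, H.IsHermitian →
      trace ((MA ⊗ₖ MB) * ((PA ⊗ₖ PB) * H - H * (PA ⊗ₖ PB))) = 0) :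
    MA * PA + PA * MA = 0 := by
  set S := MA * PA + PA * MA with hS
  set C := MB * PB - PB * MB with hC
  have hSh : Sᴴ = S := by
    simp only [hS, conjTranspose_add, conjTranspose_mul, hMA.eq, hPA.eq]
    exact add_comm _ _
  have hCh : Cᴴ = -C := by
    simp only [hC, conjTranspose_sub, conjTranspose_mul, hMB.eq, hPB.eq]
    exact (neg_sub _ _).symm
  set H := Complex.I • (S ⊗ₖ C) with hH
  have hHherm : H.IsHermitian := by
    show Hᴴ = H
    rw [hH, Matrix.conjTranspose_smul, aux_kron_conjTranspose, hSh, hCh,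
      Complex.star_def, Complex.conj_I]
    have hneg : S ⊗ₖ (-C) = -(S ⊗ₖ C) := by
      ext ⟨i, j⟩ ⟨k, l⟩
      simp [Matrix.kroneckerMap_apply]
    rw [hneg, smul_neg, neg_smul, neg_neg]
  have key := h H hHherm
  have e1 : (MA ⊗ₖ MB) * ((PA ⊗ₖ PB) * H - H * (PA ⊗ₖ PB))
      = Complex.I • ((MA * (PA * S)) ⊗ₖ (MB * (PB * C))
        - (MA * (S * PA)) ⊗ₖ (MB * (C * PB))) := by
    rw [hH, Matrix.mul_smul, Matrix.smul_mul, ← smul_sub, Matrix.mul_smul]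
    congr 1
    rw [Matrix.mul_sub]
    simp only [Matrix.mul_kronecker_mul]
  rw [e1, Matrix.trace_smul, Matrix.trace_sub, Matrix.trace_kronecker,
    Matrix.trace_kronecker] at key
  set a := Matrix.trace (MA * (PA * S)) with ha
  set b := Matrix.trace (MB * (PB * C)) with hb
  have tA : Matrix.trace (MA * (S * PA)) = a := by
    rw [ha, hS]
    simp only [mul_add, add_mul, Matrix.trace_add, mul_assoc]
    linear_combination -(aux_rot MA PA PA MA + aux_rot PA PA MA MA + aux_rot PA MA MA PA)
  have tB : Matrix.trace (MB * (C * PB)) = -b := by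
    rw [hb, hC]
    simp only [mul_sub, sub_mul, Matrix.trace_sub, mul_assoc]
    linear_combination -(aux_rot MB PB PB MB + aux_rot PB PB MB MB + aux_rot PB MB MB PB)
  rw [tA, tB] at key
  have key2 : a * b = 0 := by
    have h2 : Complex.I * (2 * (a * b)) = 0 := by
      rw [smul_eq_mul] at key
      linear_combination key
    rcases mul_eq_zero.mp h2 with h3 | h3
    · exact absurd h3 Complex.I_ne_zero
    · rcases mul_eq_zero.mp h3 with h4 | h4
      · exact absurd h4 two_ne_zero
      · exact h4
  have hCne : C ≠ 0 := fun hc => hBq (by rwa [hC, sub_eq_zero] at hc)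
  have hbne : b ≠ 0 := by
    intro hb0
    apply hCne
    apply aux_trace_conjTranspose_mul_self_eq_zero
    rw [hCh, Matrix.neg_mul, Matrix.trace_neg]
    have hcc : Matrix.trace (C * C) = 2 * b := by
      rw [hb, hC]
      simp only [mul_sub, sub_mul, Matrix.trace_sub, mul_assoc]
      linear_combination aux_rot PB MB PB MB + aux_rot MB PB PB MB + aux_rot PB PB MB MB
    rw [hcc, hb0]; ring
  have ha0 : a = 0 := by
    rcases mul_eq_zero.mp key2 with h5 | h5
    · exact h5
    · exact absurd h5 hbne
  have hS0 : S = 0 := by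
    apply aux_trace_conjTranspose_mul_self_eq_zero
    rw [hSh]
    have hss : Matrix.trace (S * S) = 2 * a := by
      rw [ha, hS]
      simp only [mul_add, add_mul, Matrix.trace_add, mul_assoc]
      linear_combination aux_rot PA MA PA MA + aux_rot PA MA MA PA + aux_rot MA MA PA PA
    rw [hss, ha0]; ring
  exact hS0
end

section
/- Let α, β : ℝ → ℝ be twice differentiable at z ∈ ℝ and define ψ : ℝ → ℂ by ψ(x) = exp(α(x) + i·β(x)). Then (|ψ'(z)|² − Re(ψ''(z) · conj(ψ(z))))/2 = (β'(z)² − α''(z)/2) · exp(2·α(z)). Consequently the conditioned second-moment weak value ⟨C Q̂²⟩/⟨C⟩ = β'² − α''/2 is strictly smaller than (⟨C Q̂⟩/⟨C⟩)² = β'² exactly when α''(z) > 0, i.e. when the amplitude is log-convex at z, violating the objective-realism inequality. -/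
/-!
Writing `ψ = exp f` with `f = α + iβ`, the chain rule gives `ψ' = ψ f'` and
`ψ'' = ψ (f'² + f'')`. Multiplying by `conj ψ` turns every term into a multiple of
`|ψ|² = e^{2α}`, and `|f'|² − Re (f'²) = 2 (Im f')² = 2 β'²`, so the `α'²` contributions cancel.
-/

open Complex ComplexConjugate

section

variable {f f' : ℝ → ℂ}

theorem deriv_cexp_comp_eq (hf : ∀ x, HasDerivAt f (f' x) x) :
    deriv (fun x => cexp (f x)) = fun x => cexp (f x) * f' x :=
  funext fun x => (hf x).cexp.deriv

theorem deriv_deriv_cexp_comp_eq {z : ℝ} {f'' : ℂ} (hf : ∀ x, HasDerivAt f (f' x) x)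
    (hf' : HasDerivAt f' f'' z) :
    deriv (deriv fun x => cexp (f x)) z = cexp (f z) * (f' z ^ 2 + f'') := by
  rw [deriv_cexp_comp_eq hf]
  exact ((hf z).cexp.mul hf').deriv.trans (by ring)

end

theorem norm_mul_sq_sub_re_mul_conj_div_two (E g h : ℂ) :
    (‖E * g‖ ^ 2 - (E * (g ^ 2 + h) * conj E).re) / 2 = (g.im ^ 2 - h.re / 2) * ‖E‖ ^ 2 := by
  rw [mul_right_comm, mul_conj, normSq_eq_norm_sq, re_ofReal_mul, norm_mul, mul_pow,
    ← normSq_eq_norm_sq g, normSq_apply]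
  simp only [add_re, sq, mul_re]
  ring

theorem norm_cexp_ofReal_add_I_mul_sq (a b : ℝ) :
    ‖cexp ((a : ℂ) + I * (b : ℂ))‖ ^ 2 = Real.exp (2 * a) := by
  rw [norm_exp, ← Real.exp_nat_mul]
  simp

/-- Second-moment weak-value identity: for `ψ = e^{α + iβ}` with `α`, `β` twice
differentiable at `z`, `(|ψ'(z)|² − Re(ψ''(z)·conj(ψ(z))))/2 = (β'(z)² − α''(z)/2)·e^{2α(z)}`;
consequently the conditioned second moment `β'² − α''/2` is strictly smaller than the squared
conditioned first moment `β'²` exactly when `α''(z) > 0` (log-convex amplitude). -/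
theorem stmt_14 (α β α' β' : ℝ → ℝ) (z a'' b'' : ℝ)
    (hα : ∀ x, HasDerivAt α (α' x) x) (hβ : ∀ x, HasDerivAt β (β' x) x)
    (hα' : HasDerivAt α' a'' z) (hβ' : HasDerivAt β' b'' z) :
    (‖deriv (fun x : ℝ => Complex.exp ((α x : ℂ) + Complex.I * (β x : ℂ))) z‖ ^ 2
      - (deriv (deriv (fun x : ℝ => Complex.exp ((α x : ℂ) + Complex.I * (β x : ℂ)))) z *
          (starRingEnd ℂ) (Complex.exp ((α z : ℂ) + Complex.I * (β z : ℂ)))).re) / 2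
      = (β' z ^ 2 - a'' / 2) * Real.exp (2 * α z) ∧
    (β' z ^ 2 - a'' / 2 < β' z ^ 2 ↔ 0 < a'') := by
  have hf : ∀ x, HasDerivAt (fun x => (α x : ℂ) + I * (β x : ℂ))
      ((α' x : ℂ) + I * (β' x : ℂ)) x := fun x =>
    (hα x).ofReal_comp.add ((hβ x).ofReal_comp.const_mul I)
  have hf' : HasDerivAt (fun x => (α' x : ℂ) + I * (β' x : ℂ)) ((a'' : ℂ) + I * (b'' : ℂ)) z :=
    hα'.ofReal_comp.add (hβ'.ofReal_comp.const_mul I)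
  refine ⟨?_, by constructor <;> intro h <;> linarith⟩
  rw [deriv_deriv_cexp_comp_eq hf hf', deriv_cexp_comp_eq hf,
    norm_mul_sq_sub_re_mul_conj_div_two, norm_cexp_ofReal_add_I_mul_sq]
  simp
end

section
/- For every a ∈ ℝ: ∫_ℝ q²·e^{−q²}·(e^{−a²} + cos(2aq)) dq / (√π·(1 + e^{−a²})) = (1 − a²)/(e^{a²} + 1). Equivalently, for the cat-state Wigner cross-section π·W(0,q) = e^{−q²}(e^{−a²} + cos(2aq))/(1 + e^{−a²}), one has √π·∫_ℝ W(0,q)·q² dq = (1 − a²)/(e^{a²}+1); in particular this second moment is negative for a² > 1, so the ratio of the two Wigner moments equals −α''/2 with α''(0) = a² − 1. -/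
/-!
Integrating by parts twice, `∫ q² e^{-q²} cos(2aq) dq = (1/2 - a²) ∫ e^{-q²} cos(2aq) dq`, and
the last integral is the real part of the Gaussian Fourier integral
`∫ e^{-q² + 2iaq} dq = √π e^{-a²}`.
The numerator is therefore `√π e^{-a²} (1/2 + 1/2 - a²) = √π e^{-a²} (1 - a²)`.
-/

open Real MeasureTheory

lemma integrable_pow_mul_exp_neg_sq_mul (n : ℕ) {g : ℝ → ℝ} (hg : Continuous g) {C : ℝ}
    (hC : ∀ q, |g q| ≤ C) : Integrable fun q : ℝ => q ^ n * exp (-q ^ 2) * g q := by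
  have h := integrable_rpow_mul_exp_neg_mul_sq one_pos (s := n)
    (by linarith [n.cast_nonneg (α := ℝ)])
  simp only [rpow_natCast, neg_mul, one_mul] at h
  exact h.mul_bdd hg.aestronglyMeasurable (ae_of_all _ hC)

lemma integral_exp_neg_sq_mul_cos (a : ℝ) :
    ∫ q : ℝ, exp (-q ^ 2) * cos (2 * a * q) = √π * exp (-a ^ 2) := by
  have hb : (-1 : ℂ).re < 0 := by simp
  have hre (q : ℝ) : (Complex.exp (-1 * q ^ 2 + 2 * a * Complex.I * q + 0)).re
      = exp (-q ^ 2) * cos (2 * a * q) := by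
    simp [Complex.exp_re, ← Complex.ofReal_pow]
  have hexp : (0 : ℂ) - (2 * a * Complex.I) ^ 2 / (4 * -1) = ((-a ^ 2 : ℝ) : ℂ) := by
    push_cast
    ring_nf
    rw [Complex.I_sq]
    ring
  have hsqrt : (π / -(-1) : ℂ) ^ (1 / 2 : ℂ) = ((√π : ℝ) : ℂ) := by
    rw [neg_neg, div_one, sqrt_eq_rpow, Complex.ofReal_cpow pi_pos.le]
    norm_num
  calc ∫ q : ℝ, exp (-q ^ 2) * cos (2 * a * q)
      = (∫ q : ℝ, Complex.exp (-1 * q ^ 2 + 2 * a * Complex.I * q + 0)).re := by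
        simp_rw [← hre]
        exact integral_re (integrable_cexp_quadratic' hb _ _)
    _ = √π * exp (-a ^ 2) := by
        rw [integral_cexp_quadratic hb, hexp, hsqrt, ← Complex.ofReal_exp, ← Complex.ofReal_mul,
          Complex.ofReal_re]

lemma integral_sq_mul_exp_neg_sq_mul_cos (a : ℝ) :
    ∫ q : ℝ, q ^ 2 * exp (-q ^ 2) * cos (2 * a * q)
      = (1 / 2 - a ^ 2) * ∫ q : ℝ, exp (-q ^ 2) * cos (2 * a * q) := by
  have hint (n : ℕ) : Integrable fun q : ℝ => q ^ n * exp (-q ^ 2) * cos (2 * a * q) :=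
    integrable_pow_mul_exp_neg_sq_mul n (by fun_prop) (abs_cos_le_one <| 2 * a * ·)
  have hint₀ : Integrable fun q : ℝ => exp (-q ^ 2) * cos (2 * a * q) := by simpa using hint 0
  have hint₁ : Integrable fun q : ℝ => q * exp (-q ^ 2) * cos (2 * a * q) := by
    simpa using hint 1
  have hint_sin : Integrable fun q : ℝ => exp (-q ^ 2) * sin (2 * a * q) := by
    simpa using integrable_pow_mul_exp_neg_sq_mul 0 (by fun_prop) (abs_sin_le_one <| 2 * a * ·)
  -- The two integrations by parts, collapsed into one antiderivative.
  have hderiv (q : ℝ) : HasDerivAt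
      (fun q => -(1 / 2) * (q * exp (-q ^ 2) * cos (2 * a * q))
        + a / 2 * (exp (-q ^ 2) * sin (2 * a * q)))
      (q ^ 2 * exp (-q ^ 2) * cos (2 * a * q)
        - (1 / 2 - a ^ 2) * (exp (-q ^ 2) * cos (2 * a * q))) q := by
    have hgauss : HasDerivAt (fun q : ℝ => exp (-q ^ 2)) (exp (-q ^ 2) * (-(2 * q))) q := by
      simpa using ((hasDerivAt_pow 2 q).neg).exp
    have hlin : HasDerivAt (fun q : ℝ => 2 * a * q) (2 * a) q := by
      simpa using (hasDerivAt_id q).const_mul (2 * a)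
    refine ((((hasDerivAt_id q).mul hgauss).mul hlin.cos).const_mul _).add
      ((hgauss.mul hlin.sin).const_mul _) |>.congr_deriv ?_
    simp only [id, Pi.mul_apply]
    ring
  have h := integral_eq_zero_of_hasDerivAt_of_integrable hderiv
    ((hint 2).sub (hint₀.const_mul _)) ((hint₁.const_mul _).add (hint_sin.const_mul _))
  rw [integral_sub (hint 2) (hint₀.const_mul _), integral_const_mul] at h
  linarith

lemma integral_sq_mul_exp_neg_sq : ∫ q : ℝ, q ^ 2 * exp (-q ^ 2) = √π / 2 := by
  have h := integral_sq_mul_exp_neg_sq_mul_cos 0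
  rw [integral_exp_neg_sq_mul_cos] at h
  simpa [div_eq_inv_mul] using h

/-- Second moment of the cat-state Wigner cross-section:
`∫ q²e^{−q²}(e^{−a²} + cos(2aq)) dq / (√π(1 + e^{−a²})) = (1 − a²)/(e^{a²} + 1)`. -/
theorem stmt_17 (a : ℝ) :
    (∫ q : ℝ, q ^ 2 * Real.exp (-q ^ 2) * (Real.exp (-a ^ 2) + Real.cos (2 * a * q))) /
      (Real.sqrt π * (1 + Real.exp (-a ^ 2))) = (1 - a ^ 2) / (Real.exp (a ^ 2) + 1) := by
  have hint : Integrable fun q : ℝ => q ^ 2 * exp (-q ^ 2) := by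
    simpa using
      integrable_pow_mul_exp_neg_sq_mul 2 continuous_const (fun _ => (abs_one (α := ℝ)).le)
  have hint_cos : Integrable fun q : ℝ => q ^ 2 * exp (-q ^ 2) * cos (2 * a * q) :=
    integrable_pow_mul_exp_neg_sq_mul 2 (by fun_prop) (abs_cos_le_one <| 2 * a * ·)
  simp_rw [mul_add]
  rw [integral_add (hint.mul_const _) hint_cos, integral_mul_const, integral_sq_mul_exp_neg_sq,
    integral_sq_mul_exp_neg_sq_mul_cos, integral_exp_neg_sq_mul_cos, exp_neg]
  have hπ : √π ≠ 0 := (sqrt_pos.mpr pi_pos).ne'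
  field_simp
  ring
end
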